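/- arXiv:2302.06112 — 2 statements merged into one kernel-verified Lean document; each statement's English description precedes it below -/
import Mathlib

section
/- Let z ~ N(0, γ²) with γ > 0. Then Var[max(0, z)] = ((π − 1)/(2π)) γ². -/
/-!
Since `max 0 z ^ 2 + max 0 (-z) ^ 2 = z ^ 2` and `-z` has the same law as `z`, the second moment
of `max 0 z` is `γ² / 2`. Its mean is the half-line Gaussian integral `∫₀^∞ x φ(x) dx = γ / √(2π)`,
so the variance is `γ² / 2 - γ² / (2π)`.
-/

open MeasureTheory ProbabilityTheory Real Set
open scoped NNReal

lemma max_zero_sq_add_max_zero_neg_sq (x : ℝ) : max 0 x ^ 2 + max 0 (-x) ^ 2 = x ^ 2 := by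
  rcases le_total 0 x with h | h <;> simp [h]

lemma integral_Ioi_mul_exp_neg_mul_sq {b : ℝ} (hb : 0 < b) :
    ∫ x in Ioi (0 : ℝ), x * exp (-b * x ^ 2) = (2 * b)⁻¹ := by
  have h := integral_rpow_mul_exp_neg_mul_rpow zero_lt_two (by norm_num : (-1 : ℝ) < 1) hb
  norm_num [rpow_two, Real.rpow_neg_one] at h
  simp only [neg_mul, h]
  ring

section Symmetric

variable {μ : Measure ℝ}

lemma integrable_max_zero_sq (h : Integrable (fun x => x ^ 2) μ) :
    Integrable (fun x => max 0 x ^ 2) μ := by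
  refine h.mono' (by fun_prop) (ae_of_all _ fun x => ?_)
  rw [Real.norm_eq_abs, abs_of_nonneg (sq_nonneg _)]
  nlinarith [max_zero_sq_add_max_zero_neg_sq x, sq_nonneg (max 0 (-x))]

lemma integral_max_zero_sq_of_map_neg_eq (hμ : μ.map (fun x => -x) = μ)
    (h : Integrable (fun x => x ^ 2) μ) :
    ∫ x, max 0 x ^ 2 ∂μ = (∫ x, x ^ 2 ∂μ) / 2 := by
  have hpos := integrable_max_zero_sq h
  have hneg : Integrable (fun x => max 0 (-x) ^ 2) μ := by
    rw [← hμ] at hpos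
    exact (integrable_map_measure (by fun_prop) (by fun_prop)).1 hpos
  have hsym : ∫ x, max 0 (-x) ^ 2 ∂μ = ∫ x, max 0 x ^ 2 ∂μ := by
    conv_rhs => rw [← hμ]
    rw [integral_map (by fun_prop) (by fun_prop)]
  have hsum := integral_add hpos hneg
  simp only [max_zero_sq_add_max_zero_neg_sq, hsym] at hsum
  linarith

end Symmetric

lemma integral_sq_gaussianReal (v : ℝ≥0) : ∫ x, x ^ 2 ∂gaussianReal 0 v = v := by
  rw [← variance_of_integral_eq_zero aemeasurable_id' integral_id_gaussianReal,
    variance_fun_id_gaussianReal]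

lemma integrable_sq_gaussianReal (μ : ℝ) (v : ℝ≥0) :
    Integrable (fun x => x ^ 2) (gaussianReal μ v) :=
  (memLp_id_gaussianReal 2).integrable_sq

lemma integral_max_zero_sq_gaussianReal (v : ℝ≥0) :
    ∫ x, max 0 x ^ 2 ∂gaussianReal 0 v = v / 2 := by
  rw [integral_max_zero_sq_of_map_neg_eq (by rw [gaussianReal_map_neg, neg_zero])
    (integrable_sq_gaussianReal 0 v), integral_sq_gaussianReal]

lemma integral_max_zero_gaussianReal (v : ℝ≥0) :
    ∫ x, max 0 x ∂gaussianReal 0 v = √(v / (2 * π)) := by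
  rcases eq_or_ne v 0 with rfl | hv
  · simp [gaussianReal_zero_var]
  have hpdf : ∀ x, gaussianPDFReal 0 v x • max 0 x = (Ioi 0).indicator
      (fun x => (√(2 * π * v))⁻¹ * (x * exp (-(2 * v : ℝ)⁻¹ * x ^ 2))) x := by
    intro x
    rcases le_or_gt x 0 with hx | hx
    · simp [hx, not_lt.2 hx]
    · simp only [gaussianPDFReal, smul_eq_mul, max_eq_right hx.le, indicator_of_mem (mem_Ioi.2 hx)]
      ring_nf
  have hv' : (0 : ℝ) < v := by positivity
  rw [integral_gaussianReal_eq_integral_smul hv, integral_congr_ae (ae_of_all _ hpdf),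
    integral_indicator measurableSet_Ioi, integral_const_mul,
    integral_Ioi_mul_exp_neg_mul_sq (by positivity)]
  have hπ : 0 < 2 * π := by positivity
  have hsqrt_v : 0 < √(v : ℝ) := sqrt_pos.2 hv'
  have hsqrt_π : 0 < √(2 * π) := sqrt_pos.2 hπ
  rw [sqrt_div' _ hπ.le, sqrt_mul hπ.le]
  field_simp
  rw [sq_sqrt hv'.le]

lemma memLp_max_zero_gaussianReal (μ : ℝ) (v : ℝ≥0) :
    MemLp (fun x => max 0 x) 2 (gaussianReal μ v) :=
  (memLp_two_iff_integrable_sq (by fun_prop)).2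
    (integrable_max_zero_sq (integrable_sq_gaussianReal μ v))

lemma variance_max_zero_gaussianReal (v : ℝ≥0) :
    Var[fun x => max 0 x; gaussianReal 0 v] = (π - 1) / (2 * π) * v := by
  rw [variance_eq_sub (memLp_max_zero_gaussianReal 0 v)]
  simp only [Pi.pow_apply]
  rw [integral_max_zero_sq_gaussianReal, integral_max_zero_gaussianReal,
    sq_sqrt (by positivity)]
  field_simp

theorem relu_gaussian_variance_general (γ : ℝ) :
    variance (fun z => max 0 z) (gaussianReal 0 (Real.toNNReal (γ ^ 2)))
      = ((Real.pi - 1) / (2 * Real.pi)) * γ ^ 2 := by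
  rw [variance_max_zero_gaussianReal, Real.coe_toNNReal _ (sq_nonneg γ)]

/-- Variance of the ReLU of a centered Gaussian: if `z ~ N(0, γ²)` with `γ > 0`,
then `Var[max(0, z)] = ((π − 1)/(2π)) γ²`. -/
theorem relu_gaussian_variance (γ : ℝ) (hγ : 0 < γ) :
    variance (fun z => max 0 z) (gaussianReal 0 (Real.toNNReal (γ ^ 2)))
      = ((Real.pi - 1) / (2 * Real.pi)) * γ ^ 2 :=
  relu_gaussian_variance_general γ
end

section
/- Let x = (x₁,…,x_n) be a random vector with finite second moments, m₁,…,m_n i.i.d. Bernoulli(p) independent of x, 0<p<1, and let w ∈ ℝⁿ be a fixed weight row. If Σ_{j≠k} w_j w_k E[x_j x_k] > 0, then Var[(1/p) Σ_j m_j w_j x_j] (PreDropout) is strictly smaller than Var[(1/p) m Σ_j w_j x_j] (PostDropout), where in the latter m is a single Bernoulli(p) variable independent of x. -/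
open MeasureTheory ProbabilityTheory Finset

/-- A real random variable `m` is Bernoulli with parameter `p`. -/
def IsBernoulli {Ω : Type*} [MeasurableSpace Ω] (μ : Measure Ω) (p : ℝ) (m : Ω → ℝ) : Prop :=
  Measurable m ∧ (∀ ω, m ω = 0 ∨ m ω = 1) ∧ μ {ω | m ω = 1} = ENNReal.ofReal p

/-!
Both estimators are unbiased for `E[Y]`, `Y = Σ_j w_j x_j`, so only the second moments differ.
Since `m₀² = m₀` and `m₀` is independent of `x`, PostDropout has second moment
`(1/p) E[Y²] = (1/p) Σ_{j,k} w_j w_k E[x_j x_k]`. For PreDropout, `E[m_j m_k]` is `p` on the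
diagonal and `p²` off it, so after scaling by `1/p²` only the diagonal terms keep the factor `1/p`
while the off-diagonal ones get factor `1`. The gap is `(1/p - 1) Σ_{j≠k} w_j w_k E[x_j x_k] > 0`.
-/

namespace IsBernoulli

variable {Ω : Type*} [MeasurableSpace Ω] {μ : Measure Ω} {p : ℝ} {m : Ω → ℝ}

lemma mul_self (h : IsBernoulli μ p m) (ω : Ω) : m ω * m ω = m ω := by
  rcases h.2.1 ω with h | h <;> simp [h]

lemma abs_le_one (h : IsBernoulli μ p m) (ω : Ω) : |m ω| ≤ 1 := by
  rcases h.2.1 ω with h | h <;> simp [h]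

lemma eq_indicator (h : IsBernoulli μ p m) : m = {ω | m ω = 1}.indicator 1 := by
  funext ω
  rcases h.2.1 ω with h | h <;> simp [Set.indicator, h]

lemma integral_eq (h : IsBernoulli μ p m) (hp : 0 ≤ p) : ∫ ω, m ω ∂μ = p := by
  have hs : MeasurableSet {ω | m ω = 1} := h.1 (measurableSet_singleton 1)
  rw [h.eq_indicator, integral_indicator_one hs, measureReal_def, h.2.2, ENNReal.toReal_ofReal hp]

lemma memLp_mul {q : ENNReal} {f : Ω → ℝ} (h : IsBernoulli μ p m) (hf : MemLp f q μ) :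
    MemLp (fun ω => m ω * f ω) q μ :=
  hf.mul' (memLp_top_of_bound h.1.aestronglyMeasurable 1 (.of_forall h.abs_le_one))

lemma integral_mul_of_indepFun {Y : Ω → ℝ} (h : IsBernoulli μ p m) (hp : 0 ≤ p)
    (hY : AEStronglyMeasurable Y μ) (hind : IndepFun m Y μ) :
    ∫ ω, m ω * Y ω ∂μ = p * ∫ ω, Y ω ∂μ := by
  rw [← h.integral_eq hp]
  exact hind.integral_mul_eq_mul_integral h.1.aestronglyMeasurable hY

lemma variance_inv_mul_of_indepFun [IsProbabilityMeasure μ] {Y : Ω → ℝ} (h : IsBernoulli μ p m)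
    (hp : 0 < p) (hY : MemLp Y 2 μ) (hind : IndepFun m Y μ) :
    variance (fun ω => 1 / p * m ω * Y ω) μ = 1 / p * ∫ ω, Y ω ^ 2 ∂μ - (∫ ω, Y ω ∂μ) ^ 2 := by
  have hmean : ∫ ω, 1 / p * m ω * Y ω ∂μ = ∫ ω, Y ω ∂μ := by
    simp_rw [mul_assoc]
    rw [integral_const_mul, h.integral_mul_of_indepFun hp.le hY.1 hind]
    field_simp
  have hsq : ∫ ω, (1 / p * m ω * Y ω) ^ 2 ∂μ = 1 / p * ∫ ω, Y ω ^ 2 ∂μ := by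
    have hpt : ∀ ω, (1 / p * m ω * Y ω) ^ 2 = (1 / p) ^ 2 * (m ω * Y ω ^ 2) := fun ω => by
      linear_combination (1 / p) ^ 2 * Y ω ^ 2 * h.mul_self ω
    simp_rw [hpt]
    rw [integral_const_mul, h.integral_mul_of_indepFun (Y := fun ω => Y ω ^ 2) hp.le (hY.1.pow 2)
      (hind.comp measurable_id (measurable_id.pow_const 2))]
    field_simp
  have hL2 : MemLp (fun ω => 1 / p * m ω * Y ω) 2 μ := by
    simpa only [mul_assoc] using (h.memLp_mul hY).const_mul (1 / p)
  rw [variance_eq_sub hL2]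
  simp only [Pi.pow_apply]
  rw [hsq, hmean]

end IsBernoulli

section WeightedSum

variable {Ω : Type*} [MeasurableSpace Ω] {μ : Measure Ω} {ι : Type*} [Fintype ι]

lemma integral_sum_sq {X : ι → Ω → ℝ} (hX : ∀ j, MemLp (X j) 2 μ) :
    ∫ ω, (∑ j, X j ω) ^ 2 ∂μ = ∑ j, ∑ k, ∫ ω, X j ω * X k ω ∂μ := by
  have hint : ∀ j k, Integrable (fun ω => X j ω * X k ω) μ := fun j k =>
    (hX j).integrable_mul (hX k)
  simp_rw [sq, Finset.sum_mul_sum]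
  rw [integral_finsetSum _ fun j _ => integrable_finsetSum _ fun k _ => hint j k]
  exact Finset.sum_congr rfl fun j _ => integral_finsetSum _ fun k _ => hint j k

variable {x : Ω → ι → ℝ}

lemma integral_weighted_sum (hx : ∀ j, Integrable (fun ω => x ω j) μ) (w : ι → ℝ) :
    ∫ ω, ∑ j, w j * x ω j ∂μ = ∑ j, w j * ∫ ω, x ω j ∂μ := by
  rw [integral_finsetSum _ fun j _ => (hx j).const_mul (w j)]
  simp_rw [integral_const_mul]

lemma integral_weighted_sum_sq (hx : ∀ j, MemLp (fun ω => x ω j) 2 μ) (w : ι → ℝ) :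
    ∫ ω, (∑ j, w j * x ω j) ^ 2 ∂μ = ∑ j, ∑ k, w j * w k * ∫ ω, x ω j * x ω k ∂μ := by
  rw [integral_sum_sq fun j => (hx j).const_mul (w j)]
  refine Finset.sum_congr rfl fun j _ => Finset.sum_congr rfl fun k _ => ?_
  rw [← integral_const_mul]
  congr 1 with ω
  ring

end WeightedSum

section Dropout

variable {Ω : Type*} [MeasurableSpace Ω] {μ : Measure Ω} {ι : Type*} {p : ℝ} {x : Ω → ι → ℝ}

lemma ProbabilityTheory.iIndepFun.integral_mul_of_isBernoulli [DecidableEq ι] {m : ι → Ω → ℝ}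
    (hm : ∀ j, IsBernoulli μ p (m j)) (hp : 0 ≤ p) (hind : iIndepFun m μ) (j k : ι) :
    ∫ ω, m j ω * m k ω ∂μ = if j = k then p else p * p := by
  split_ifs with hjk
  · subst hjk
    simp_rw [(hm j).mul_self]
    exact (hm j).integral_eq hp
  · rw [(hm j).integral_mul_of_indepFun hp (hm k).1.aestronglyMeasurable (hind.indepFun hjk),
      (hm k).integral_eq hp]

lemma integral_preDropout_summand {m : ι → Ω → ℝ} (hm : ∀ j, IsBernoulli μ p (m j))
    (hp : 0 ≤ p) (hx : AEMeasurable x μ) (hmx : IndepFun (fun ω j => m j ω) x μ)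
    (w : ι → ℝ) (j : ι) :
    ∫ ω, m j ω * w j * x ω j ∂μ = p * (w j * ∫ ω, x ω j ∂μ) := by
  have hM : Measurable fun ω j => m j ω := measurable_pi_lambda _ fun j => (hm j).1
  have h := hmx.integral_comp_mul_comp hM.aemeasurable hx
    (measurable_pi_apply j).aestronglyMeasurable (measurable_pi_apply j).aestronglyMeasurable
  simp only [Function.comp_def, Pi.mul_apply, (hm j).integral_eq hp] at h
  simp_rw [mul_right_comm _ (w j), integral_mul_const, h]
  ring

lemma integral_preDropout_summand_mul {m : ι → Ω → ℝ} (hm : ∀ j, Measurable (m j))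
    (hx : AEMeasurable x μ) (hmx : IndepFun (fun ω j => m j ω) x μ) (w : ι → ℝ) (j k : ι) :
    ∫ ω, m j ω * w j * x ω j * (m k ω * w k * x ω k) ∂μ
      = (∫ ω, m j ω * m k ω ∂μ) * (w j * w k * ∫ ω, x ω j * x ω k ∂μ) := by
  have hM : Measurable fun ω j => m j ω := measurable_pi_lambda _ hm
  have hprod : Measurable fun v : ι → ℝ => v j * v k :=
    (measurable_pi_apply j).mul (measurable_pi_apply k)
  have h := hmx.integral_comp_mul_comp hM.aemeasurable hx
    hprod.aestronglyMeasurable hprod.aestronglyMeasurable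
  simp only [Function.comp_def, Pi.mul_apply] at h
  have hrw : ∀ ω, m j ω * w j * x ω j * (m k ω * w k * x ω k)
      = w j * w k * (m j ω * m k ω * (x ω j * x ω k)) := fun ω => by ring
  simp_rw [hrw, integral_const_mul, h]
  ring

variable [Fintype ι]

lemma variance_preDropout [IsProbabilityMeasure μ] [DecidableEq ι] {m : ι → Ω → ℝ}
    (hm : ∀ j, IsBernoulli μ p (m j)) (hp : 0 < p) (hind : iIndepFun m μ)
    (hx : ∀ j, MemLp (fun ω => x ω j) 2 μ) (hmx : IndepFun (fun ω j => m j ω) x μ)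
    (w : ι → ℝ) :
    variance (fun ω => 1 / p * ∑ j, m j ω * w j * x ω j) μ
      = 1 / p ^ 2 * ∑ j, ∑ k, (if j = k then p else p * p) * (w j * w k * ∫ ω, x ω j * x ω k ∂μ)
        - (∑ j, w j * ∫ ω, x ω j ∂μ) ^ 2 := by
  have hxae : AEMeasurable x μ := aemeasurable_pi_lambda x fun j => (hx j).1.aemeasurable
  have hsummand : ∀ j, MemLp (fun ω => m j ω * w j * x ω j) 2 μ := fun j => by
    simpa only [mul_assoc, mul_left_comm (w j)] using ((hm j).memLp_mul (hx j)).const_mul (w j)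
  have hmean : ∫ ω, 1 / p * ∑ j, m j ω * w j * x ω j ∂μ = ∑ j, w j * ∫ ω, x ω j ∂μ := by
    rw [integral_const_mul, integral_finsetSum _ fun j _ => (hsummand j).integrable one_le_two]
    simp_rw [integral_preDropout_summand hm hp.le hxae hmx, ← Finset.mul_sum]
    field_simp
  have hsq : ∫ ω, (1 / p * ∑ j, m j ω * w j * x ω j) ^ 2 ∂μ
      = 1 / p ^ 2 * ∑ j, ∑ k, (if j = k then p else p * p)
        * (w j * w k * ∫ ω, x ω j * x ω k ∂μ) := by
    simp_rw [mul_pow, one_div_pow]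
    rw [integral_const_mul, integral_sum_sq hsummand]
    simp_rw [integral_preDropout_summand_mul (fun j => (hm j).1) hxae hmx,
      hind.integral_mul_of_isBernoulli hm hp.le]
  have hL2 : MemLp (fun ω => 1 / p * ∑ j, m j ω * w j * x ω j) 2 μ :=
    (memLp_finsetSum _ fun j _ => hsummand j).const_mul _
  rw [variance_eq_sub hL2]
  simp only [Pi.pow_apply]
  rw [hsq, hmean]

lemma variance_postDropout [IsProbabilityMeasure μ] {m₀ : Ω → ℝ} (hm₀ : IsBernoulli μ p m₀)
    (hp : 0 < p) (hx : ∀ j, MemLp (fun ω => x ω j) 2 μ) (hm₀x : IndepFun m₀ x μ) (w : ι → ℝ) :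
    variance (fun ω => 1 / p * m₀ ω * ∑ j, w j * x ω j) μ
      = 1 / p * ∑ j, ∑ k, w j * w k * ∫ ω, x ω j * x ω k ∂μ
        - (∑ j, w j * ∫ ω, x ω j ∂μ) ^ 2 := by
  have hlin : Measurable fun v : ι → ℝ => ∑ j, w j * v j := by fun_prop
  rw [hm₀.variance_inv_mul_of_indepFun hp
      (memLp_finsetSum _ fun j _ => (hx j).const_mul (w j)) (hm₀x.comp measurable_id hlin),
    integral_weighted_sum_sq hx, integral_weighted_sum fun j => (hx j).integrable one_le_two]

end Dropout

section DoubleSum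

variable {ι R : Type*} [Fintype ι] [DecidableEq ι] [CommRing R]

lemma Finset.sum_sum_ite_eq_mul (a b : R) (c : ι → ι → R) :
    ∑ j, ∑ k, (if j = k then a else b) * c j k
      = b * ∑ j, ∑ k, c j k + (a - b) * ∑ j, c j j := by
  have hsplit : ∀ j k, (if j = k then a else b) * c j k
      = b * c j k + (a - b) * if j = k then c j k else 0 := fun j k => by
    split_ifs <;> ring
  simp_rw [hsplit, Finset.sum_add_distrib, ← Finset.mul_sum, Finset.sum_ite_eq, Finset.mem_univ,
    if_true]

lemma Finset.sum_sum_sdiff_singleton (c : ι → ι → R) :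
    ∑ j, ∑ k ∈ univ \ {j}, c j k = ∑ j, ∑ k, c j k - ∑ j, c j j := by
  simp_rw [Finset.sdiff_singleton_eq_erase, Finset.sum_erase_eq_sub (Finset.mem_univ _),
    Finset.sum_sub_distrib]

end DoubleSum

theorem preDropout_var_lt_postDropout_var_general {Ω : Type*} [MeasurableSpace Ω]
    (μ : Measure Ω) [IsProbabilityMeasure μ] (n : ℕ) (p : ℝ)
    (hp0 : 0 < p) (hp1 : p < 1)
    (x : Ω → Fin n → ℝ) (hx : ∀ j, MemLp (fun ω => x ω j) 2 μ)
    (m : Fin n → Ω → ℝ) (hmB : ∀ j, IsBernoulli μ p (m j))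
    (hmiid : iIndepFun m μ)
    (hmx : IndepFun (fun ω j => m j ω) x μ)
    (m₀ : Ω → ℝ) (hm₀ : IsBernoulli μ p m₀) (hm₀x : IndepFun m₀ x μ)
    (w : Fin n → ℝ)
    (hpos : 0 < ∑ j, ∑ k ∈ univ \ {j}, w j * w k * ∫ ω, x ω j * x ω k ∂μ) :
    variance (fun ω => (1 / p) * ∑ j, m j ω * w j * x ω j) μ
      < variance (fun ω => (1 / p) * m₀ ω * ∑ j, w j * x ω j) μ := by
  rw [variance_preDropout hmB hp0 hmiid hx hmx, variance_postDropout hm₀ hp0 hx hm₀x,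
    Finset.sum_sum_ite_eq_mul]
  rw [Finset.sum_sum_sdiff_singleton] at hpos
  set T := ∑ j, ∑ k, w j * w k * ∫ ω, x ω j * x ω k ∂μ
  set D := ∑ j, w j * w j * ∫ ω, x ω j * x ω j ∂μ
  have hgap : 1 / p * T - 1 / p ^ 2 * (p * p * T + (p - p * p) * D) = (1 - p) / p * (T - D) := by
    field_simp
    ring
  have hgap_pos := mul_pos (div_pos (sub_pos.2 hp1) hp0) hpos
  linarith

/-- Proposition 2: if `Σ_{j≠k} w_j w_k E[x_j x_k] > 0`, then the PreDropout
variance `Var[(1/p) Σ_j m_j w_j x_j]` is strictly smaller than the PostDropout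
variance `Var[(1/p) m Σ_j w_j x_j]`. -/
theorem preDropout_var_lt_postDropout_var {Ω : Type*} [MeasurableSpace Ω]
    (μ : Measure Ω) [IsProbabilityMeasure μ] (n : ℕ) (p : ℝ)
    (hp0 : 0 < p) (hp1 : p < 1)
    (x : Ω → Fin n → ℝ) (hx : ∀ j, MemLp (fun ω => x ω j) 2 μ)
    (hxmeas : Measurable x)
    (m : Fin n → Ω → ℝ) (hmB : ∀ j, IsBernoulli μ p (m j))
    (hmiid : iIndepFun m μ)
    (hmident : ∀ j k, Measure.map (m j) μ = Measure.map (m k) μ)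
    (hmx : IndepFun (fun ω j => m j ω) x μ)
    (m₀ : Ω → ℝ) (hm₀ : IsBernoulli μ p m₀) (hm₀x : IndepFun m₀ x μ)
    (w : Fin n → ℝ)
    (hpos : 0 < ∑ j, ∑ k ∈ univ \ {j}, w j * w k * ∫ ω, x ω j * x ω k ∂μ) :
    variance (fun ω => (1 / p) * ∑ j, m j ω * w j * x ω j) μ
      < variance (fun ω => (1 / p) * m₀ ω * ∑ j, w j * x ω j) μ :=
  preDropout_var_lt_postDropout_var_general μ n p hp0 hp1 x hx m hmB hmiid hmx m₀ hm₀ hm₀x w hpos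
end
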